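/- For every δ ∈ ℝ^{J−1} and every j ∈ {1,…,J−1}, the row sum of partial derivatives satisfies Σ_{l=1}^{J−1} ∂T_j/∂δ_l(δ) = 1 − (1/ms*_j(δ)) · Σ_{k=1}^K d_k 𝒫^k_j(δ) 𝒫^k_J(δ), and this quantity is strictly less than 1. -/

import Mathlib

/-!
Each choice probability is a weighted softmax `p_j = w_j e^{x_j} / Σ_m w_m e^{x_m}`, whose
partial derivatives are `∂p_j/∂x_m = p_j (𝟙[j = m] - p_m)`. Hence
`∂T_j/∂δ_l = 𝟙[j = l] - Σ_k d_k p^k_j (𝟙[j = l] - p^k_l) / ms*_j`, and summing over the inside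
goods `l < J` turns `Σ_l (𝟙[j = l] - p^k_l)` into `1 - Σ_{l < J} p^k_l = p^k_J`. The row sum is
`< 1` because both `ms*_j` and `Σ_k d_k p^k_j p^k_J` are positive.
-/

open Finset Function Real

lemma hasDerivAt_mul_exp_update_apply {ι : Type*} [DecidableEq ι] (w x : ι → ℝ) (m j : ι) :
    HasDerivAt (fun t => w j * exp (update x m t j))
      (w j * exp (x j) * (Pi.single m 1 : ι → ℝ) j) (x m) := by
  have h := ((hasDerivAt_pi.1 (hasDerivAt_update x m (x m)) j).exp).const_mul (w j)
  simpa only [update_eq_self, mul_assoc] using h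

section WeightedSoftmax

variable {ι : Type*} [Fintype ι]

noncomputable def weightedSoftmax (w x : ι → ℝ) (j : ι) : ℝ :=
  w j * exp (x j) / ∑ m, w m * exp (x m)

variable {w : ι → ℝ}

lemma sum_mul_exp_pos [Nonempty ι] (hw : ∀ m, 0 < w m) (x : ι → ℝ) :
    0 < ∑ m, w m * exp (x m) :=
  sum_pos (fun m _ => mul_pos (hw m) (exp_pos _)) univ_nonempty

lemma weightedSoftmax_pos (hw : ∀ m, 0 < w m) (x : ι → ℝ) (j : ι) :
    0 < weightedSoftmax w x j :=
  have : Nonempty ι := ⟨j⟩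
  div_pos (mul_pos (hw j) (exp_pos _)) (sum_mul_exp_pos hw x)

lemma sum_weightedSoftmax [Nonempty ι] (hw : ∀ m, 0 < w m) (x : ι → ℝ) :
    ∑ j, weightedSoftmax w x j = 1 := by
  simp only [weightedSoftmax]
  rw [← sum_div, div_self (sum_mul_exp_pos hw x).ne']

lemma hasDerivAt_weightedSoftmax_update [DecidableEq ι] (hw : ∀ m, 0 < w m)
    (x : ι → ℝ) (m j : ι) :
    HasDerivAt (fun t => weightedSoftmax w (update x m t) j)
      (weightedSoftmax w x j * ((Pi.single m 1 : ι → ℝ) j - weightedSoftmax w x m)) (x m) := by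
  have : Nonempty ι := ⟨j⟩
  have hden := HasDerivAt.fun_sum (u := univ)
    (fun i _ => hasDerivAt_mul_exp_update_apply w x m i)
  have hD := (sum_mul_exp_pos hw x).ne'
  have hq := (hasDerivAt_mul_exp_update_apply w x m j).fun_div hden
    (by simpa only [update_eq_self] using hD)
  simp only [update_eq_self] at hq
  refine hq.congr_deriv ?_
  simp only [weightedSoftmax, Pi.single_apply, mul_ite, mul_one, mul_zero, sum_ite_eq', mem_univ,
    if_true]
  field_simp
  split_ifs <;> ring

lemma weightedSoftmax_add_right (w x y : ι → ℝ) (j : ι) :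
    weightedSoftmax w (fun m => x m + y m) j = weightedSoftmax (fun m => w m * exp (y m)) x j := by
  simp only [weightedSoftmax, exp_add, mul_comm (exp (x _)), mul_assoc]

end WeightedSoftmax

lemma sum_mul_pos_of_sum_pos {K : Type*} [Fintype K] {d a : K → ℝ} (hd0 : ∀ k, 0 ≤ d k)
    (hd : 0 < ∑ k, d k) (ha : ∀ k, 0 < a k) : 0 < ∑ k, d k * a k := by
  obtain ⟨k, -, hk⟩ :=
    exists_lt_of_sum_lt (s := univ) (f := fun _ => (0 : ℝ)) (g := d) (by simpa using hd)
  exact sum_pos' (fun k _ => mul_nonneg (hd0 k) (ha k).le) ⟨k, mem_univ k, mul_pos hk (ha k)⟩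

section MixedLogit

variable {n K : ℕ} {d : Fin K → ℝ} {w : Fin K → Fin (n + 1) → ℝ}

noncomputable def mixedLogitShare (d : Fin K → ℝ) (w : Fin K → Fin (n + 1) → ℝ) (δ : Fin n → ℝ)
    (j : Fin (n + 1)) : ℝ :=
  ∑ k, d k * weightedSoftmax (w k) (Fin.snoc δ 0) j

lemma mixedLogitShare_pos (hd0 : ∀ k, 0 ≤ d k) (hd : 0 < ∑ k, d k) (hw : ∀ k m, 0 < w k m)
    (δ : Fin n → ℝ) (j : Fin (n + 1)) : 0 < mixedLogitShare d w δ j :=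
  sum_mul_pos_of_sum_pos hd0 hd fun k => weightedSoftmax_pos (hw k) _ j

lemma hasDerivAt_weightedSoftmax_snoc_update {w : Fin (n + 1) → ℝ} (hw : ∀ m, 0 < w m)
    (δ : Fin n → ℝ) (l j : Fin n) :
    HasDerivAt (fun t => weightedSoftmax w (Fin.snoc (update δ l t) 0) j.castSucc)
      (weightedSoftmax w (Fin.snoc δ 0) j.castSucc *
        ((Pi.single l 1 : Fin n → ℝ) j - weightedSoftmax w (Fin.snoc δ 0) l.castSucc)) (δ l) := by
  have h := hasDerivAt_weightedSoftmax_update hw (Fin.snoc δ 0 : Fin (n + 1) → ℝ) l.castSucc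
    j.castSucc
  simp only [Fin.snoc_castSucc, Pi.single_apply, Fin.castSucc_inj] at h
  simpa only [Fin.snoc_update, Pi.single_apply] using h

lemma hasDerivAt_mixedLogitShare_update (hw : ∀ k m, 0 < w k m) (δ : Fin n → ℝ) (l j : Fin n) :
    HasDerivAt (fun t => mixedLogitShare d w (update δ l t) j.castSucc)
      (∑ k, d k * (weightedSoftmax (w k) (Fin.snoc δ 0) j.castSucc *
        ((Pi.single l 1 : Fin n → ℝ) j - weightedSoftmax (w k) (Fin.snoc δ 0) l.castSucc)))
      (δ l) :=
  HasDerivAt.fun_sum fun k _ => (hasDerivAt_weightedSoftmax_snoc_update (hw k) δ l j).const_mul _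

lemma hasDerivAt_sub_log_mixedLogitShare_update (hd0 : ∀ k, 0 ≤ d k) (hd : 0 < ∑ k, d k)
    (hw : ∀ k m, 0 < w k m) (c : ℝ) (δ : Fin n → ℝ) (l j : Fin n) :
    HasDerivAt (fun t => update δ l t j + c - log (mixedLogitShare d w (update δ l t) j.castSucc))
      ((Pi.single l 1 : Fin n → ℝ) j -
        (∑ k, d k * (weightedSoftmax (w k) (Fin.snoc δ 0) j.castSucc *
          ((Pi.single l 1 : Fin n → ℝ) j - weightedSoftmax (w k) (Fin.snoc δ 0) l.castSucc))) /
          mixedLogitShare d w δ j.castSucc) (δ l) := by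
  have hcoord := hasDerivAt_pi.1 (hasDerivAt_update δ l (δ l)) j
  have hlog := (hasDerivAt_mixedLogitShare_update (d := d) hw δ l j).log
    (by simpa only [update_eq_self] using (mixedLogitShare_pos hd0 hd hw δ j.castSucc).ne')
  simp only [update_eq_self] at hlog
  exact (hcoord.add_const c).sub hlog

lemma sum_pi_single_sub_castSucc {q : Fin (n + 1) → ℝ} (hq : ∑ m, q m = 1) (j : Fin n) :
    ∑ l : Fin n, ((Pi.single l 1 : Fin n → ℝ) j - q l.castSucc) = q (Fin.last n) := by
  rw [Fin.sum_univ_castSucc] at hq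
  rw [sum_sub_distrib, sum_pi_single]
  simp only [mem_univ, if_true]
  linarith

lemma sum_partials_sub_log_mixedLogitShare (hw : ∀ k m, 0 < w k m) (δ : Fin n → ℝ) (j : Fin n) :
    ∑ l : Fin n, ((Pi.single l 1 : Fin n → ℝ) j -
        (∑ k, d k * (weightedSoftmax (w k) (Fin.snoc δ 0) j.castSucc *
          ((Pi.single l 1 : Fin n → ℝ) j - weightedSoftmax (w k) (Fin.snoc δ 0) l.castSucc))) /
          mixedLogitShare d w δ j.castSucc) =
      1 - 1 / mixedLogitShare d w δ j.castSucc *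
        ∑ k, d k * weightedSoftmax (w k) (Fin.snoc δ 0) j.castSucc *
          weightedSoftmax (w k) (Fin.snoc δ 0) (Fin.last n) := by
  rw [sum_sub_distrib, sum_pi_single, ← sum_div, sum_comm]
  simp only [← mul_sum, sum_pi_single_sub_castSucc (sum_weightedSoftmax (hw _) _), mem_univ,
    if_true, mul_assoc]
  ring

end MixedLogit

theorem stmt_3_general
    (n K : ℕ)
    (d : Fin K → ℝ) (hd0 : ∀ k, 0 ≤ d k) (hd1 : ∑ k, d k = 1)
    (P : Fin K → Fin (n + 1) → ℝ)
    (hP0 : ∀ k j, 0 < P k j)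
    (u : Fin (n + 1) → Fin K → ℝ)
    (ms : Fin (n + 1) → ℝ)
    (Pcond : (Fin n → ℝ) → Fin K → Fin (n + 1) → ℝ)
    (hPcond : ∀ δ k j, Pcond δ k j =
      P k j * Real.exp ((Fin.snoc δ 0 : Fin (n + 1) → ℝ) j + u j k) /
        ∑ l, P k l * Real.exp ((Fin.snoc δ 0 : Fin (n + 1) → ℝ) l + u l k))
    (msStar : (Fin n → ℝ) → Fin (n + 1) → ℝ)
    (hmsStar : ∀ δ j, msStar δ j = ∑ k, d k * Pcond δ k j)
    (T : (Fin n → ℝ) → Fin n → ℝ)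
    (hT : ∀ δ j, T δ j = δ j + Real.log (ms j.castSucc) - Real.log (msStar δ j.castSucc)) :
    ∀ (δ : Fin n → ℝ) (j : Fin n),
      (∀ l : Fin n, DifferentiableAt ℝ (fun t : ℝ => T (Function.update δ l t) j) (δ l)) ∧
      (∑ l : Fin n, deriv (fun t : ℝ => T (Function.update δ l t) j) (δ l)) =
        1 - (1 / msStar δ j.castSucc) *
          ∑ k, d k * Pcond δ k j.castSucc * Pcond δ k (Fin.last n) ∧
      1 - (1 / msStar δ j.castSucc) *
          ∑ k, d k * Pcond δ k j.castSucc * Pcond δ k (Fin.last n) < 1 := by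
  set w : Fin K → Fin (n + 1) → ℝ := fun k m => P k m * exp (u m k)
  have hw : ∀ k m, 0 < w k m := fun k m => mul_pos (hP0 k m) (exp_pos _)
  have hd : 0 < ∑ k, d k := hd1 ▸ one_pos
  obtain rfl : Pcond = fun δ k => weightedSoftmax (w k) (Fin.snoc δ 0) :=
    funext₃ fun δ k j => (hPcond δ k j).trans
      (weightedSoftmax_add_right (P k) (Fin.snoc δ 0) (u · k) j)
  obtain rfl : msStar = mixedLogitShare d w := funext₂ hmsStar
  obtain rfl : T = fun δ j => δ j + log (ms j.castSucc) - log (mixedLogitShare d w δ j.castSucc) :=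
    funext₂ hT
  intro δ j
  have hT' l := hasDerivAt_sub_log_mixedLogitShare_update hd0 hd hw (log (ms j.castSucc)) δ l j
  refine ⟨fun l => (hT' l).differentiableAt, ?_, ?_⟩
  · simp only [fun l => (hT' l).deriv]
    exact sum_partials_sub_log_mixedLogitShare hw δ j
  · refine sub_lt_self _ (mul_pos (one_div_pos.2 (mixedLogitShare_pos hd0 hd hw δ _)) ?_)
    simpa only [mul_assoc] using
      sum_mul_pos_of_sum_pos hd0 hd fun k => mul_pos (weightedSoftmax_pos (hw k) _ _)
        (weightedSoftmax_pos (hw k) _ _)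

/-- Row-sum step in the proof of Lemma 2 (condition 1 of the BLP contraction
theorem): for every `δ` and every inside good `j`, the partial derivatives of `T_j`
exist, their sum over `l = 1,…,J-1` equals
`1 - (1/ms*_j(δ)) · Σ_k d_k 𝒫^k_j(δ) 𝒫^k_J(δ)`, and this quantity is `< 1`. -/
theorem stmt_3
    (n K : ℕ) (hn : 1 ≤ n) (hK : 1 ≤ K)
    (d : Fin K → ℝ) (hd0 : ∀ k, 0 ≤ d k) (hd1 : ∑ k, d k = 1)
    (P : Fin K → Fin (n + 1) → ℝ)
    (hP0 : ∀ k j, 0 < P k j) (hP1 : ∀ k, ∑ j, P k j = 1)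
    (u : Fin (n + 1) → Fin K → ℝ) (hu : ∀ k, u (Fin.last n) k = 0)
    (ms : Fin (n + 1) → ℝ) (hms0 : ∀ j, 0 < ms j) (hms1 : ∑ j, ms j = 1)
    (Pcond : (Fin n → ℝ) → Fin K → Fin (n + 1) → ℝ)
    (hPcond : ∀ δ k j, Pcond δ k j =
      P k j * Real.exp ((Fin.snoc δ 0 : Fin (n + 1) → ℝ) j + u j k) /
        ∑ l, P k l * Real.exp ((Fin.snoc δ 0 : Fin (n + 1) → ℝ) l + u l k))
    (msStar : (Fin n → ℝ) → Fin (n + 1) → ℝ)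
    (hmsStar : ∀ δ j, msStar δ j = ∑ k, d k * Pcond δ k j)
    (T : (Fin n → ℝ) → Fin n → ℝ)
    (hT : ∀ δ j, T δ j = δ j + Real.log (ms j.castSucc) - Real.log (msStar δ j.castSucc)) :
    ∀ (δ : Fin n → ℝ) (j : Fin n),
      (∀ l : Fin n, DifferentiableAt ℝ (fun t : ℝ => T (Function.update δ l t) j) (δ l)) ∧
      (∑ l : Fin n, deriv (fun t : ℝ => T (Function.update δ l t) j) (δ l)) =
        1 - (1 / msStar δ j.castSucc) *
          ∑ k, d k * Pcond δ k j.castSucc * Pcond δ k (Fin.last n) ∧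
      1 - (1 / msStar δ j.castSucc) *
          ∑ k, d k * Pcond δ k j.castSucc * Pcond δ k (Fin.last n) < 1 :=
  stmt_3_general n K d hd0 hd1 P hP0 u ms Pcond hPcond msStar hmsStar T hT
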